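/- Let M be a loopless multigraph with e(M) ≥ 1 satisfying max over μ ⊆ V(M) with |μ| ≥ 2 of e(M[μ])/(|μ|−1) = e(M)/(v(M)−1). Let F_M be the graph obtained by subdividing every edge of M and adding a new vertex v* adjacent to every vertex of V(M). Then m_2(F_M) = (e(F_M)−1)/(v(F_M)−2) = (2e(M)+v(M)−1)/(e(M)+v(M)−1); that is, F_M is 2-balanced. -/

import Mathlib

open Finset
open scoped Classical

/-- Number of edges of `F` induced by the vertex set `ν`. -/
noncomputable def eInd {V : Type*} [Fintype V] [DecidableEq V] (F : SimpleGraph V)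
    (ν : Finset V) : ℕ :=
  (F.edgeFinset.filter (fun e => ∀ v ∈ e, v ∈ ν)).card

/-- The 2-density of `F`: the maximum of `(e(F[ν]) - 1)/(|ν| - 2)` over `ν` with `|ν| ≥ 3`. -/
noncomputable def m2 {V : Type*} [Fintype V] [DecidableEq V] (F : SimpleGraph V) : ℝ :=
  sSup {x : ℝ | ∃ ν : Finset V, 3 ≤ ν.card ∧
    x = ((eInd F ν : ℝ) - 1) / ((ν.card : ℝ) - 2)}

/-- The graph `F_M` obtained from a loopless multigraph `M` (with vertex type `U`, edge index
type `E` and endpoint map `ep`) by subdividing every edge and adding a new vertex `v*`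
adjacent to every vertex of `M`. -/
noncomputable def FM {U E : Type*} (ep : E → Sym2 U) : SimpleGraph (U ⊕ E ⊕ Unit) :=
  SimpleGraph.fromRel (fun a b =>
    match a, b with
    | Sum.inl u, Sum.inr (Sum.inl e) => u ∈ ep e
    | Sum.inl _, Sum.inr (Sum.inr _) => True
    | _, _ => False)

/-- Number of edges of the multigraph induced by `μ ⊆ V(M)`. -/
noncomputable def eMulti {U E : Type*} [Fintype E] [DecidableEq U] (ep : E → Sym2 U)
    (μ : Finset U) : ℕ :=
  (Finset.univ.filter (fun e : E => ∀ u ∈ ep e, u ∈ μ)).card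

/-!
Split a vertex set `ν` of `F_M` as `A ∪ B ∪ S` with `A ⊆ V(M)`, `B ⊆ E(M)`, `S ⊆ {v*}`. Since
`F_M` is bipartite between `V(M)` and `E(M) ∪ {v*}`, `e(F_M[ν]) = ∑_{e ∈ B} |A ∩ e| + |S| |A|`.
If `|A| ≤ 1` this is at most `|ν| - 1`, so the ratio is at most `1`. Otherwise an edge `e ∈ B`
contributes more than `1` only when it lies inside `A`; the number `c` of such edges is at most
`|B|` and at most `e(M[A]) ≤ e(M) (|A| - 1) / (v(M) - 1)`, whence
`c (e(M) + v(M) - 1) ≤ e(M) (|A| + |B| - 1)`, which is exactly the bound needed.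
The full vertex set attains it.
-/

theorem eInd_eq_card_filter_product {α β : Type*} [Fintype α] [Fintype β] [DecidableEq α]
    [DecidableEq β] (G : SimpleGraph (α ⊕ β)) (hl : ∀ a a', ¬G.Adj (.inl a) (.inl a'))
    (hr : ∀ b b', ¬G.Adj (.inr b) (.inr b')) (ν : Finset (α ⊕ β)) :
    eInd G ν = #((ν.toLeft ×ˢ ν.toRight).filter fun p => G.Adj (.inl p.1) (.inr p.2)) := by
  symm
  refine card_bij (fun p _ => s(.inl p.1, .inr p.2)) ?_ ?_ ?_
  · rintro ⟨a, b⟩ hp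
    simp only [mem_filter, mem_product, mem_toLeft, mem_toRight] at hp
    simp only [mem_filter, SimpleGraph.mem_edgeFinset, SimpleGraph.mem_edgeSet, Sym2.mem_iff]
    exact ⟨hp.2, by rintro v (rfl | rfl) <;> tauto⟩
  · rintro ⟨a, b⟩ _ ⟨a', b'⟩ _ h
    simpa using h
  · intro z hz
    induction z using Sym2.ind with
    | _ v w =>
      simp only [mem_filter, SimpleGraph.mem_edgeFinset, SimpleGraph.mem_edgeSet,
        Sym2.mem_iff] at hz
      obtain ⟨hadj, hmem⟩ := hz
      have hv := hmem v (Or.inl rfl)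
      have hw := hmem w (Or.inr rfl)
      rcases v with a | b <;> rcases w with a' | b'
      · exact absurd hadj (hl a a')
      · exact ⟨(a, b'), by simp [hv, hw, hadj], rfl⟩
      · exact ⟨(a', b), by simp [hv, hw, hadj.symm], Sym2.eq_swap⟩
      · exact absurd hadj (hr b b')

lemma Sym2.card_inter_toFinset_le {α : Type*} [DecidableEq α] (A : Finset α) (z : Sym2 α) :
    #(A ∩ z.toFinset) ≤ 1 + if z.toFinset ⊆ A then 1 else 0 := by
  have h2 : #z.toFinset ≤ 2 := by rw [Sym2.card_toFinset]; split_ifs <;> norm_num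
  split_ifs with h
  · exact (card_le_card inter_subset_right).trans h2
  · have := card_lt_card <| ssubset_of_subset_of_ne inter_subset_right
      fun heq => h (inter_eq_right.mp heq)
    omega

section FM

variable {U E : Type*} (ep : E → Sym2 U)

lemma FM_adj_inl_inl (u u' : U) : ¬(FM ep).Adj (.inl u) (.inl u') := by simp [FM]

lemma FM_adj_inr_inr (x y : E ⊕ Unit) : ¬(FM ep).Adj (.inr x) (.inr y) := by
  rcases x with _ | _ <;> rcases y with _ | _ <;> simp [FM]

lemma FM_adj_inl_inr_inl (u : U) (e : E) :
    (FM ep).Adj (.inl u) (.inr (.inl e)) ↔ u ∈ ep e := by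
  simp [FM]

lemma FM_adj_inl_inr_inr (u : U) (t : Unit) : (FM ep).Adj (.inl u) (.inr (.inr t)) := by
  simp [FM]

variable [Fintype U] [Fintype E] [DecidableEq U] [DecidableEq E]

lemma eInd_FM (ν : Finset (U ⊕ E ⊕ Unit)) :
    eInd (FM ep) ν = ∑ e ∈ ν.toRight.toLeft, #(ν.toLeft ∩ (ep e).toFinset)
      + #ν.toRight.toRight * #ν.toLeft := by
  rw [eInd_eq_card_filter_product _ (FM_adj_inl_inl ep) (FM_adj_inr_inr ep), card_filter,
    sum_product_right, sum_sum_eq_sum_toLeft_add_sum_toRight]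
  simp only [FM_adj_inl_inr_inl, FM_adj_inl_inr_inr, if_true, sum_const, smul_eq_mul,
    mul_one, ← card_filter]
  congr 1
  exact sum_congr rfl fun e _ => congrArg card (by ext; simp)

lemma eInd_FM_univ (hloopless : ∀ e, ¬(ep e).IsDiag) :
    eInd (FM ep) univ = 2 * Fintype.card E + Fintype.card U := by
  simp [eInd_FM, Sym2.card_toFinset_of_not_isDiag _ (hloopless _), mul_comm]

lemma FM_two_density_le
    (hbal : ∀ μ : Finset U, 2 ≤ #μ →
      ((Fintype.card U : ℝ) - 1) * eMulti ep μ ≤ Fintype.card E * ((#μ : ℝ) - 1))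
    (ν : Finset (U ⊕ E ⊕ Unit)) (hν : 3 ≤ #ν) :
    ((eInd (FM ep) ν : ℝ) - 1) / ((#ν : ℝ) - 2) ≤
      (2 * (Fintype.card E : ℝ) + Fintype.card U - 1) /
        ((Fintype.card E : ℝ) + Fintype.card U - 1) := by
  set m := Fintype.card E
  set n := Fintype.card U
  set A := ν.toLeft
  set B := ν.toRight.toLeft
  set S := ν.toRight.toRight
  have hk : #ν = #A + #B + #S := by
    rw [← card_toLeft_add_card_toRight (u := ν), ← card_toLeft_add_card_toRight (u := ν.toRight)]
    ring
  have hS : #S ≤ 1 := card_le_univ S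
  have hs := eInd_FM ep ν
  have hD : (0 : ℝ) < m + n - 1 := by
    have := card_le_univ ν
    simp only [Fintype.card_sum, Fintype.card_unit] at this
    have : (3 : ℝ) ≤ n + (m + 1) := by exact_mod_cast hν.trans this
    linarith
  have hν' : (3 : ℝ) ≤ #ν := by exact_mod_cast hν
  rw [div_le_div_iff₀ (by linarith) hD]
  rcases lt_or_ge #A 2 with hA | hA
  · -- `F_M[ν]` is bipartite with one side `A`, so it has at most `#A * (#ν - #A) ≤ #ν - 1` edges.
    have hsk : eInd (FM ep) ν + 1 ≤ #ν := by
      have : eInd (FM ep) ν ≤ (#B + #S) * #A := calc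
        _ ≤ ∑ e ∈ B, #A + #S * #A := by
          rw [hs]; gcongr; exact inter_subset_left
        _ = (#B + #S) * #A := by rw [sum_const, smul_eq_mul, add_mul]
      interval_cases #A <;> omega
    have : (eInd (FM ep) ν : ℝ) + 1 ≤ #ν := by exact_mod_cast hsk
    nlinarith [mul_nonneg (by linarith : (0 : ℝ) ≤ #ν - 2) (Nat.cast_nonneg m)]
  · set c := #(B.filter fun e => (ep e).toFinset ⊆ A)
    have hsc : eInd (FM ep) ν ≤ #B + c + #S * #A := calc
      _ ≤ ∑ e ∈ B, (1 + if (ep e).toFinset ⊆ A then 1 else 0) + #S * #A := by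
          rw [hs]; gcongr; exact Sym2.card_inter_toFinset_le _ _
      _ = #B + c + #S * #A := by
          rw [sum_add_distrib, sum_const, smul_eq_mul, mul_one, sum_boole]
          rfl
    have hcB : c ≤ #B := card_filter_le _ _
    have hcM : c ≤ eMulti ep A :=
      card_le_card fun e he => by simp_all [eMulti, subset_iff]
    have hAn : (#A : ℝ) ≤ n := by exact_mod_cast card_le_univ A
    have hsc' : (eInd (FM ep) ν : ℝ) ≤ #B + c + #S * #A := by exact_mod_cast hsc
    have hcB' : (c : ℝ) ≤ #B := by exact_mod_cast hcB
    have hcM' : (c : ℝ) ≤ eMulti ep A := by exact_mod_cast hcM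
    have hS' : (#S : ℝ) ≤ 1 := by exact_mod_cast hS
    have hA' : (2 : ℝ) ≤ #A := by exact_mod_cast hA
    have hk' : (#ν : ℝ) = #A + #B + #S := by exact_mod_cast hk
    rw [hk']
    -- `c * (m + n - 1) = c * m + c * (n - 1) ≤ #B * m + m * (#A - 1)`
    nlinarith [mul_le_mul_of_nonneg_right hsc' hD.le,
      mul_le_mul_of_nonneg_left hcB' (Nat.cast_nonneg m),
      mul_le_mul_of_nonneg_left hcM' (by linarith : (0:ℝ) ≤ n - 1),
      mul_nonneg (mul_nonneg (sub_nonneg.2 hS') (by linarith : (0:ℝ) ≤ #A - 2)) hD.le,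
      mul_nonneg (sub_nonneg.2 hS') (by linarith : (0:ℝ) ≤ n - 1), hbal A hA]

end FM

/-- Let `M` be a loopless multigraph with `e(M) ≥ 1` such that
`max_{μ ⊆ V(M), |μ| ≥ 2} e(M[μ])/(|μ| - 1) = e(M)/(v(M) - 1)`.  Then
`m₂(F_M) = (e(F_M) - 1)/(v(F_M) - 2) = (2e(M) + v(M) - 1)/(e(M) + v(M) - 1)`,
i.e. `F_M` is 2-balanced. -/
theorem stmt18 {U E : Type*} [Fintype U] [Fintype E] [DecidableEq U] [DecidableEq E]
    (ep : E → Sym2 U)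
    (hloopless : ∀ e : E, ¬ (ep e).IsDiag)
    (hE : 1 ≤ Fintype.card E)
    (hbal : ∀ μ : Finset U, 2 ≤ μ.card →
      (eMulti ep μ : ℚ) / ((μ.card : ℚ) - 1) ≤
        (Fintype.card E : ℚ) / ((Fintype.card U : ℚ) - 1)) :
    m2 (FM ep) =
      (2 * (Fintype.card E : ℝ) + (Fintype.card U : ℝ) - 1) /
        ((Fintype.card E : ℝ) + (Fintype.card U : ℝ) - 1) := by
  obtain ⟨e⟩ := Fintype.card_pos_iff.mp hE
  have hU : 2 ≤ Fintype.card U :=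
    (Sym2.card_toFinset_of_not_isDiag _ (hloopless e)).symm.le.trans (card_le_univ _)
  have hbal' : ∀ μ : Finset U, 2 ≤ #μ →
      ((Fintype.card U : ℝ) - 1) * eMulti ep μ ≤ Fintype.card E * ((#μ : ℝ) - 1) := by
    intro μ hμ
    have hμ' : (2 : ℚ) ≤ #μ := by exact_mod_cast hμ
    have hU' : (#μ : ℚ) ≤ Fintype.card U := by exact_mod_cast card_le_univ μ
    have := (div_le_div_iff₀ (by linarith) (by linarith)).mp (hbal μ hμ)
    exact_mod_cast (by linarith : ((Fintype.card U : ℚ) - 1) * eMulti ep μ ≤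
      Fintype.card E * ((#μ : ℚ) - 1))
  refine IsGreatest.csSup_eq ⟨⟨univ, ?_, ?_⟩, ?_⟩
  · simp only [card_univ, Fintype.card_sum, Fintype.card_unit]
    omega
  · rw [eInd_FM_univ ep hloopless, card_univ]
    simp only [Fintype.card_sum, Fintype.card_unit]
    push_cast
    ring
  · rintro x ⟨ν, hν, rfl⟩
    exact FM_two_density_le ep hbal' ν hν
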